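/- Let d ≥ 2, let n be a real number with n ≥ d, and let v : ℝ^d → ℝ be a positive C³ function satisfying Δv = P at every point, where P := (1/v)·((n/2)‖∇v‖² + c_n). Then for all real numbers q, m and every compactly supported C¹ function ψ : ℝ^d → ℝ, one has (n/2 + 1 - q)·∫ v^(-q)·P^m·‖∇v‖²·ψ dx + c_n·∫ v^(-q)·P^m·ψ dx = - ∫ v^(1-q)·P^m·⟨∇v, ∇ψ⟩ dx - m·∫ v^(1-q)·P^(m-1)·⟨∇v, ∇P⟩·ψ dx, where all integrals are over ℝ^d with respect to Lebesgue measure. -/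

import Mathlib

open MeasureTheory Metric
open scoped RealInnerProductSpace

/-- The Euclidean Laplacian: the trace of the Hessian. -/
noncomputable def lap {d : ℕ} (u : EuclideanSpace ℝ (Fin d) → ℝ)
    (x : EuclideanSpace ℝ (Fin d)) : ℝ :=
  ∑ i, iteratedFDeriv ℝ 2 u x ![EuclideanSpace.single i 1, EuclideanSpace.single i 1]

/-- The constant `c_n`: `2/(n-2)` for `n > 2` and `1/2` for `n = 2`. -/
noncomputable def cExp (n : ℝ) : ℝ := if 2 < n then 2 / (n - 2) else 1 / 2

/-!
Apply the weighted Green identity `∫ w ⟪∇v, ∇ψ⟫ = -∫ (w Δv + ⟪∇w, ∇v⟫) ψ` with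
`w = v^(1-q) P^m`, obtained by integrating `∂ᵢ(w ∂ᵢv) ψ` by parts in each coordinate.
Since `Δv = P` and `v P = (n/2)‖∇v‖² + c_n`, the term `w Δv` equals
`v^(-q) P^m ((n/2)‖∇v‖² + c_n)`, while the chain rule gives
`⟪∇w, ∇v⟫ = (1-q) v^(-q) P^m ‖∇v‖² + m v^(1-q) P^(m-1) ⟪∇v, ∇P⟫`.
The real powers are smooth because `v > 0` and `P > 0`, the latter from `n ≥ 0` and `c_n > 0`.
-/

theorem cExp_pos (n : ℝ) : 0 < cExp n := by
  unfold cExp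
  split_ifs with h
  · exact div_pos two_pos (sub_pos.2 h)
  · norm_num

section Gradient

variable {F : Type*} [NormedAddCommGroup F] [InnerProductSpace ℝ F] [CompleteSpace F]

theorem ContDiff.gradient {f : F → ℝ} {m n : WithTop ℕ∞} (hf : ContDiff ℝ n f)
    (hmn : m + 1 ≤ n) : ContDiff ℝ m (gradient f) :=
  (InnerProductSpace.toDual ℝ F).symm.contDiff.comp (hf.fderiv_right hmn)

theorem OrthonormalBasis.inner_gradient_eq_sum {ι : Type*} [Fintype ι]
    (b : OrthonormalBasis ι ℝ F) (f g : F → ℝ) (x : F) :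
    ⟪gradient f x, gradient g x⟫ = ∑ i, fderiv ℝ f x (b i) * fderiv ℝ g x (b i) := by
  rw [← b.sum_inner_mul_inner]
  refine Finset.sum_congr rfl fun i _ => ?_
  rw [inner_gradient_left, real_inner_comm, inner_gradient_left]

noncomputable def pFun (n : ℝ) (v : F → ℝ) (x : F) : ℝ :=
  1 / v x * (n / 2 * ‖gradient v x‖ ^ 2 + cExp n)

variable {n : ℝ} {v : F → ℝ}

theorem mul_pFun {x : F} (hv : v x ≠ 0) :
    v x * pFun n v x = n / 2 * ‖gradient v x‖ ^ 2 + cExp n := by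
  rw [pFun, ← mul_assoc, mul_one_div_cancel hv, one_mul]

theorem pFun_pos (hn : 0 ≤ n) {x : F} (hv : 0 < v x) : 0 < pFun n v x :=
  mul_pos (one_div_pos.2 hv) (add_pos_of_nonneg_of_pos (by positivity) (cExp_pos n))

theorem ContDiff.pFun {k : WithTop ℕ∞} (hv : ContDiff ℝ (k + 1) v) (hv0 : ∀ x, v x ≠ 0) :
    ContDiff ℝ k (pFun n v) :=
  (contDiff_const.div (hv.of_le le_self_add) hv0).mul
    ((contDiff_const.mul ((hv.gradient le_rfl).norm_sq ℝ)).add contDiff_const)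

end Gradient

theorem fderiv_rpow_mul_rpow {E : Type*} [NormedAddCommGroup E] [NormedSpace ℝ E]
    {f g : E → ℝ} {x : E} (hf : DifferentiableAt ℝ f x) (hg : DifferentiableAt ℝ g x)
    (hfx : f x ≠ 0) (hgx : g x ≠ 0) (a b : ℝ) :
    fderiv ℝ (fun y => f y ^ a * g y ^ b) x
      = (a * f x ^ (a - 1) * g x ^ b) • fderiv ℝ f x
        + (b * f x ^ a * g x ^ (b - 1)) • fderiv ℝ g x := by
  rw [fderiv_fun_mul (hf.rpow_const (.inl hfx)) (hg.rpow_const (.inl hgx)),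
    (hf.hasFDerivAt.rpow_const (p := a) (.inl hfx)).fderiv,
    (hg.hasFDerivAt.rpow_const (p := b) (.inl hgx)).fderiv]
  module

theorem Continuous.integrable_mul_of_hasCompactSupport {X : Type*} [TopologicalSpace X]
    [MeasurableSpace X] [OpensMeasurableSpace X] {μ : Measure X} [IsFiniteMeasureOnCompacts μ]
    {f ψ : X → ℝ} (hf : Continuous f) (hψ : Continuous ψ) (hψc : HasCompactSupport ψ) :
    Integrable (fun x => f x * ψ x) μ :=
  (hf.mul hψ).integrable_of_hasCompactSupport hψc.mul_left

theorem integral_mul_fderiv_eq_neg_fderiv_mul_of_hasCompactSupport {E : Type*}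
    [NormedAddCommGroup E] [NormedSpace ℝ E] [FiniteDimensional ℝ E] [MeasurableSpace E]
    [BorelSpace E] {μ : Measure E} [μ.IsAddHaarMeasure] {f ψ : E → ℝ}
    (hf : ContDiff ℝ 1 f) (hψ : ContDiff ℝ 1 ψ) (hψc : HasCompactSupport ψ) (v : E) :
    ∫ x, f x * fderiv ℝ ψ x v ∂μ = -∫ x, fderiv ℝ f x v * ψ x ∂μ := by
  have hf' := (hf.continuous_fderiv one_ne_zero).clm_apply (continuous_const (y := v))
  have hψ' := (hψ.continuous_fderiv one_ne_zero).clm_apply (continuous_const (y := v))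
  exact integral_mul_fderiv_eq_neg_fderiv_mul_of_integrable
    (hf'.integrable_mul_of_hasCompactSupport hψ.continuous hψc)
    (hf.continuous.integrable_mul_of_hasCompactSupport hψ' (hψc.fderiv_apply ℝ v))
    (hf.continuous.integrable_mul_of_hasCompactSupport hψ.continuous hψc)
    (fun x _ => hf.differentiable one_ne_zero x) (fun x _ => hψ.differentiable one_ne_zero x)

section Euclidean

variable {d : ℕ}

theorem lap_eq_sum_fderiv_fderiv {u : EuclideanSpace ℝ (Fin d) → ℝ}
    {x : EuclideanSpace ℝ (Fin d)} (hu : DifferentiableAt ℝ (fderiv ℝ u) x) :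
    lap u x = ∑ i, fderiv ℝ (fun y => fderiv ℝ u y (EuclideanSpace.basisFun (Fin d) ℝ i)) x
      (EuclideanSpace.basisFun (Fin d) ℝ i) := by
  refine Finset.sum_congr rfl fun i _ => ?_
  rw [iteratedFDeriv_two_apply, fderiv_clm_apply hu (differentiableAt_const _)]
  simp

theorem integral_mul_inner_gradient_eq_neg {μ : Measure (EuclideanSpace ℝ (Fin d))}
    [μ.IsAddHaarMeasure] {w u ψ : EuclideanSpace ℝ (Fin d) → ℝ} (hw : ContDiff ℝ 1 w)
    (hu : ContDiff ℝ 2 u) (hψ : ContDiff ℝ 1 ψ) (hψc : HasCompactSupport ψ) :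
    ∫ x, w x * ⟪gradient u x, gradient ψ x⟫ ∂μ
      = -∫ x, (w x * lap u x + ⟪gradient w x, gradient u x⟫) * ψ x ∂μ := by
  let e := EuclideanSpace.basisFun (Fin d) ℝ
  have hDu : ∀ i, ContDiff ℝ 1 fun x => fderiv ℝ u x (e i) := fun i =>
    (hu.fderiv_right (m := 1) le_rfl).clm_apply contDiff_const
  have hflux : ∀ i, ContDiff ℝ 1 fun x => w x * fderiv ℝ u x (e i) := fun i => hw.mul (hDu i)
  have hdiv : ∀ x, ∑ i, fderiv ℝ (fun y => w y * fderiv ℝ u y (e i)) x (e i)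
      = w x * lap u x + ⟪gradient w x, gradient u x⟫ := by
    intro x
    rw [lap_eq_sum_fderiv_fderiv ((hu.fderiv_right (m := 1) le_rfl).differentiable one_ne_zero x),
      e.inner_gradient_eq_sum, Finset.mul_sum, ← Finset.sum_add_distrib]
    refine Finset.sum_congr rfl fun i _ => ?_
    rw [fderiv_fun_mul (hw.differentiable one_ne_zero x) ((hDu i).differentiable one_ne_zero x)]
    simp only [add_apply, smul_apply, smul_eq_mul]
    ring
  have hdiv_int : ∀ i, Integrable
      (fun x => fderiv ℝ (fun y => w y * fderiv ℝ u y (e i)) x (e i) * ψ x) μ := fun i =>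
    (((hflux i).continuous_fderiv one_ne_zero).clm_apply continuous_const
      ).integrable_mul_of_hasCompactSupport hψ.continuous hψc
  have hflux_int : ∀ i, Integrable
      (fun x => (w x * fderiv ℝ u x (e i)) * fderiv ℝ ψ x (e i)) μ := fun i =>
    (hflux i).continuous.integrable_mul_of_hasCompactSupport
      ((hψ.continuous_fderiv one_ne_zero).clm_apply continuous_const) (hψc.fderiv_apply ℝ _)
  calc ∫ x, w x * ⟪gradient u x, gradient ψ x⟫ ∂μ
      = ∑ i, ∫ x, (w x * fderiv ℝ u x (e i)) * fderiv ℝ ψ x (e i) ∂μ := by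
        rw [← integral_finsetSum _ fun i _ => hflux_int i]
        simp only [e.inner_gradient_eq_sum, Finset.mul_sum, mul_assoc]
    _ = ∑ i, -∫ x, fderiv ℝ (fun y => w y * fderiv ℝ u y (e i)) x (e i) * ψ x ∂μ :=
        Finset.sum_congr rfl fun i _ =>
          integral_mul_fderiv_eq_neg_fderiv_mul_of_hasCompactSupport (hflux i) hψ hψc _
    _ = -∫ x, (w x * lap u x + ⟪gradient w x, gradient u x⟫) * ψ x ∂μ := by
        rw [Finset.sum_neg_distrib, ← integral_finsetSum _ fun i _ => hdiv_int i]
        simp only [← Finset.sum_mul, hdiv]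

theorem rpow_mul_pFun_rpow_mul_lap_add_inner_gradient {n q m : ℝ}
    {v : EuclideanSpace ℝ (Fin d) → ℝ} {x : EuclideanSpace ℝ (Fin d)}
    (hv : DifferentiableAt ℝ v x) (hP : DifferentiableAt ℝ (pFun n v) x) (hvx : 0 < v x)
    (hPx : 0 < pFun n v x) (hlap : lap v x = pFun n v x) :
    v x ^ (1 - q) * pFun n v x ^ m * lap v x
        + ⟪gradient (fun y => v y ^ (1 - q) * pFun n v y ^ m) x, gradient v x⟫
      = (n / 2 + 1 - q) * (v x ^ (-q) * pFun n v x ^ m * ‖gradient v x‖ ^ 2)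
        + cExp n * (v x ^ (-q) * pFun n v x ^ m)
        + m * (v x ^ (1 - q) * pFun n v x ^ (m - 1) * ⟪gradient v x, gradient (pFun n v) x⟫) := by
  rw [inner_gradient_left, fderiv_rpow_mul_rpow hv hP hvx.ne' hPx.ne', hlap]
  simp only [add_apply, smul_apply, smul_eq_mul, ← inner_gradient_left,
    real_inner_self_eq_norm_sq, real_inner_comm (gradient (pFun n v) x)]
  have hvq : v x ^ (1 - q) = v x ^ (-q) * v x := by
    rw [← Real.rpow_add_one hvx.ne']
    ring_nf
  rw [show 1 - q - 1 = -q by ring, hvq]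
  linear_combination (v x ^ (-q) * pFun n v x ^ m) * mul_pFun (n := n) hvx.ne'

end Euclidean

theorem stmt_10_general (d : ℕ) (n : ℝ) (hn : (d : ℝ) ≤ n)
    (v : EuclideanSpace ℝ (Fin d) → ℝ) (hv : ContDiff ℝ 3 v) (hvpos : ∀ x, 0 < v x)
    (P : EuclideanSpace ℝ (Fin d) → ℝ)
    (hP : ∀ x, P x = (1 / v x) * ((n / 2) * ‖gradient v x‖ ^ 2 + cExp n))
    (heq : ∀ x, lap v x = P x) :
    ∀ (q m : ℝ) (ψ : EuclideanSpace ℝ (Fin d) → ℝ),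
      ContDiff ℝ 1 ψ → HasCompactSupport ψ →
      (n / 2 + 1 - q) * (∫ x, (v x) ^ (-q) * P x ^ m * ‖gradient v x‖ ^ 2 * ψ x ∂volume)
        + cExp n * (∫ x, (v x) ^ (-q) * P x ^ m * ψ x ∂volume)
      = -(∫ x, (v x) ^ (1 - q) * P x ^ m * ⟪gradient v x, gradient ψ x⟫ ∂volume)
        - m * ∫ x, (v x) ^ (1 - q) * P x ^ (m - 1) * ⟪gradient v x, gradient P x⟫ * ψ x ∂volume := by
  intro q m ψ hψ hψc
  obtain rfl : P = pFun n v := funext hP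
  have hv2 : ContDiff ℝ 2 v := hv.of_le (by norm_num)
  have hPpos : ∀ x, 0 < pFun n v x := fun x => pFun_pos (d.cast_nonneg.trans hn) (hvpos x)
  have hP1 : ContDiff ℝ 1 (pFun n v) := hv2.pFun fun x => (hvpos x).ne'
  have hw : ContDiff ℝ 1 fun x => v x ^ (1 - q) * pFun n v x ^ m :=
    ((hv2.of_le one_le_two).rpow_const_of_ne fun x => (hvpos x).ne').mul
      (hP1.rpow_const_of_ne fun x => (hPpos x).ne')
  have hvc : ∀ p : ℝ, Continuous fun x => v x ^ p := fun p =>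
    hv.continuous.rpow_const fun x => .inl (hvpos x).ne'
  have hPc : ∀ p : ℝ, Continuous fun x => pFun n v x ^ p := fun p =>
    hP1.continuous.rpow_const fun x => .inl (hPpos x).ne'
  have hgv : Continuous (gradient v) := (hv.gradient (m := 0) (by norm_num)).continuous
  have hgP : Continuous (gradient (pFun n v)) := (hP1.gradient (m := 0) le_rfl).continuous
  have hA : Integrable fun x => v x ^ (-q) * pFun n v x ^ m * ‖gradient v x‖ ^ 2 * ψ x :=
    Continuous.integrable_mul_of_hasCompactSupport (by fun_prop) hψ.continuous hψc
  have hB : Integrable fun x => v x ^ (-q) * pFun n v x ^ m * ψ x :=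
    Continuous.integrable_mul_of_hasCompactSupport (by fun_prop) hψ.continuous hψc
  have hC : Integrable fun x => v x ^ (1 - q) * pFun n v x ^ (m - 1)
      * ⟪gradient v x, gradient (pFun n v) x⟫ * ψ x :=
    Continuous.integrable_mul_of_hasCompactSupport (by fun_prop) hψ.continuous hψc
  rw [integral_mul_inner_gradient_eq_neg hw hv2 hψ hψc, neg_neg]
  simp_rw [rpow_mul_pFun_rpow_mul_lap_add_inner_gradient (hv2.differentiable (by norm_num) _)
    (hP1.differentiable one_ne_zero _) (hvpos _) (hPpos _) (heq _), add_mul,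
    mul_assoc (n / 2 + 1 - q), mul_assoc (cExp n), mul_assoc m]
  rw [integral_add, integral_add, integral_const_mul, integral_const_mul, integral_const_mul]
  · ring
  exacts [hA.const_mul _, hB.const_mul _, (hA.const_mul _).add (hB.const_mul _),
    hC.const_mul _]

/-- Corollary 4.2, Euclidean case: the integral identity with the weight `P^m`. -/
theorem stmt_10 (d : ℕ) (hd : 2 ≤ d) (n : ℝ) (hn : (d : ℝ) ≤ n)
    (v : EuclideanSpace ℝ (Fin d) → ℝ) (hv : ContDiff ℝ 3 v) (hvpos : ∀ x, 0 < v x)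
    (P : EuclideanSpace ℝ (Fin d) → ℝ)
    (hP : ∀ x, P x = (1 / v x) * ((n / 2) * ‖gradient v x‖ ^ 2 + cExp n))
    (heq : ∀ x, lap v x = P x) :
    ∀ (q m : ℝ) (ψ : EuclideanSpace ℝ (Fin d) → ℝ),
      ContDiff ℝ 1 ψ → HasCompactSupport ψ →
      (n / 2 + 1 - q) * (∫ x, (v x) ^ (-q) * P x ^ m * ‖gradient v x‖ ^ 2 * ψ x ∂volume)
        + cExp n * (∫ x, (v x) ^ (-q) * P x ^ m * ψ x ∂volume)
      = -(∫ x, (v x) ^ (1 - q) * P x ^ m * ⟪gradient v x, gradient ψ x⟫ ∂volume)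
        - m * ∫ x, (v x) ^ (1 - q) * P x ^ (m - 1) * ⟪gradient v x, gradient P x⟫ * ψ x ∂volume :=
  stmt_10_general d n hn v hv hvpos P hP heq
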